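/- arXiv:2404.17106 — 3 statements merged into one kernel-verified Lean document; each statement's English description precedes it below -/
import Mathlib

section
/- Let G be a connected graph and let e,f be two non-adjacent edges of G (distinct edges sharing no endpoint). If e₀e₁…e_n is a path in the line graph G′ with e₀ = e and e_n = f that has minimum length among all paths in G′ connecting e and f, then there exist vertices v₀,v₁,…,v_{n+1} forming a path in G such that e_i = v_i v_{i+1} for every 0 ≤ i ≤ n. -/
/-!
Formalization of definitions and a statement from
"Edge-connectivity and edge-ends in infinite graphs" (arXiv:2404.17106).
-/

universe u

namespace EdgeEndPaper

variable {V : Type u}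

/-- A ray in `G`: a one-way infinite path `v₀v₁v₂…`. -/
structure Ray (G : SimpleGraph V) : Type u where
  f : ℕ → V
  inj : Function.Injective f
  adj : ∀ n : ℕ, G.Adj (f n) (f (n + 1))

/-- A double ray in `G`: a two-way infinite path. -/
structure DoubleRay (G : SimpleGraph V) : Type u where
  f : ℤ → V
  inj : Function.Injective f
  adj : ∀ n : ℤ, G.Adj (f n) (f (n + 1))

variable (G : SimpleGraph V)

/-- A `Sym2` containing two distinct elements is the pair of them. -/
lemma sym2_eq_pair {α : Type*} {z : Sym2 α} {x y : α} (hx : x ∈ z) (hy : y ∈ z)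
    (hxy : x ≠ y) : z = s(x, y) := by
  induction z using Sym2.inductionOn with
  | hf a b =>
    rw [Sym2.mem_iff] at hx hy
    rcases hx with rfl | rfl <;> rcases hy with rfl | rfl
    · exact absurd rfl hxy
    · rfl
    · exact Sym2.eq_swap
    · exact absurd rfl hxy

/-- Two distinct `Sym2`s have at most one common element. -/
lemma sym2_common_unique {α : Type*} {z z' : Sym2 α} (hzz : z ≠ z') {x y : α}
    (hx : x ∈ z) (hx' : x ∈ z') (hy : y ∈ z) (hy' : y ∈ z') : x = y := by
  by_contra hxy
  exact hzz ((sym2_eq_pair hx hy hxy).trans (sym2_eq_pair hx' hy' hxy).symm)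

/-- A vertex-minimal path `e₀e₁…eₙ` in the line graph `G'` connecting two non-adjacent
edges `e` and `f` of `G` comes from a path `v₀v₁…v_{n+1}` in `G` with `eᵢ = vᵢv_{i+1}`. -/
theorem lineGraph_min_path_to_path (hG : G.Connected)
    (e f : G.edgeSet) (hef : e ≠ f) (hnadj : ¬ G.lineGraph.Adj e f)
    (n : ℕ) (E : Fin (n + 1) → G.edgeSet)
    (hE0 : E 0 = e) (hEn : E (Fin.last n) = f)
    (hinj : Function.Injective E)
    (hadj : ∀ (i : ℕ) (h : i + 1 < n + 1), G.lineGraph.Adj (E ⟨i, by omega⟩) (E ⟨i + 1, h⟩))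
    (hmin : ∀ (m : ℕ) (E' : Fin (m + 1) → G.edgeSet),
      E' 0 = e → E' (Fin.last m) = f → Function.Injective E' →
      (∀ (i : ℕ) (h : i + 1 < m + 1), G.lineGraph.Adj (E' ⟨i, by omega⟩) (E' ⟨i + 1, h⟩)) →
      n ≤ m) :
    ∃ w : Fin (n + 2) → V, Function.Injective w ∧
      (∀ i : Fin (n + 1), G.Adj (w i.castSucc) (w i.succ)) ∧
      ∀ i : Fin (n + 1), (E i : Sym2 V) = s(w i.castSucc, w i.succ) := by
  classical
  -- `n ≥ 2`
  have hn2 : 2 ≤ n := by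
    by_contra h
    interval_cases n
    · exact hef (hE0.symm.trans hEn)
    · exact hnadj (by
        have := hadj 0 (by omega)
        rwa [show (⟨0, by omega⟩ : Fin 2) = 0 from rfl, hE0,
          show (⟨1, by omega⟩ : Fin 2) = Fin.last 1 from rfl, hEn] at this)
  -- a total version of `E`
  set DE : ℕ → G.edgeSet := fun i => E ⟨min i n, by omega⟩ with hDEdef
  have hDE : ∀ {i : ℕ} (h : i < n + 1), DE i = E ⟨i, h⟩ := by
    intro i h
    simp only [hDEdef]
    congr 1
    exact Fin.ext (by simp; omega)
  have hDE0 : DE 0 = e := by rw [hDE (by omega)]; exact hE0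
  have hDEn : DE n = f := by
    rw [hDE (by omega)]
    exact (congrArg E (Fin.ext rfl)).trans hEn
  have hinj' : ∀ {i j : ℕ}, i ≤ n → j ≤ n → DE i = DE j → i = j := by
    intro i j hi hj hij
    rw [hDE (by omega), hDE (by omega)] at hij
    have := hinj hij
    exact congrArg Fin.val this
  have hadj' : ∀ i : ℕ, i < n → G.lineGraph.Adj (DE i) (DE (i + 1)) := by
    intro i h
    rw [hDE (by omega), hDE (by omega)]
    exact hadj i (by omega)
  have hndiag : ∀ i : ℕ, ¬ (DE i : Sym2 V).IsDiag := fun i =>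
    G.not_isDiag_of_mem_edgeSet (DE i).2
  -- shortcut argument from minimality
  have shortcut : ∀ a b : ℕ, a + 2 ≤ b → b ≤ n → ∀ x : V,
      x ∈ (DE a : Sym2 V) → x ∈ (DE b : Sym2 V) → False := by
    intro a b hab hbn x hxa hxb
    have hDEab : DE a ≠ DE b := fun h => absurd (hinj' (by omega) hbn h) (by omega)
    set d : ℕ := b - a - 1 with hd
    set m : ℕ := n - d with hm
    have hdm : m + d = n := by omega
    set E' : Fin (m + 1) → G.edgeSet :=
      fun j => DE (if (j : ℕ) ≤ a then (j : ℕ) else (j : ℕ) + d) with hE'def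
    have hidx : ∀ j : Fin (m + 1), (if (j : ℕ) ≤ a then (j : ℕ) else (j : ℕ) + d) ≤ n := by
      intro j
      have := j.isLt
      split <;> omega
    have hle : n ≤ m := by
      apply hmin m E'
      · simp only [hE'def]
        rw [show ((0 : Fin (m+1)) : ℕ) = 0 from rfl]
        simpa using hDE0
      · simp only [hE'def]
        rw [show ((Fin.last m : Fin (m+1)) : ℕ) = m from rfl]
        rw [if_neg (by omega), show m + d = n from hdm]
        exact hDEn
      · intro j1 j2 h12
        simp only [hE'def] at h12
        have := hinj' (hidx j1) (hidx j2) h12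
        apply Fin.ext
        revert this
        split <;> split <;> omega
      · intro i h
        simp only [hE'def]
        by_cases hia : i + 1 ≤ a
        · rw [if_pos (by omega), if_pos hia]
          exact hadj' i (by omega)
        · by_cases hia' : i ≤ a
          · -- i = a
            have hia2 : i = a := by omega
            rw [if_pos hia', if_neg hia, hia2, show a + 1 + d = b from by omega]
            exact SimpleGraph.lineGraph_adj_iff_exists.2 ⟨hDEab, x, hxa, hxb⟩
          · rw [if_neg hia', if_neg hia, show i + 1 + d = i + d + 1 from by omega]
            exact hadj' (i + d) (by omega)
    omega
  -- common vertices of consecutive edges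
  have hcv : ∀ i : ℕ, ∃ v : V, i < n →
      v ∈ (DE i : Sym2 V) ∧ v ∈ (DE (i + 1) : Sym2 V) := by
    intro i
    by_cases h : i < n
    · obtain ⟨-, v, hv⟩ := SimpleGraph.lineGraph_adj_iff_exists.1 (hadj' i h)
      exact ⟨v, fun _ => hv⟩
    · exact ⟨(Quot.out (e : Sym2 V)).1, fun h' => absurd h' h⟩
  choose c hc using hcv
  have h0n : (0 : ℕ) < n := by omega
  have hn1n : n - 1 < n := by omega
  have hcn : c (n - 1) ∈ (DE n : Sym2 V) := by
    have := (hc (n - 1) hn1n).2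
    rwa [show n - 1 + 1 = n from by omega] at this
  -- the endpoints
  set v0 : V := Sym2.Mem.other (hc 0 h0n).1 with hv0def
  set vN : V := Sym2.Mem.other hcn with hvNdef
  set w' : ℕ → V := fun i => if i = 0 then v0 else if i ≤ n then c (i - 1) else vN
    with hw'def
  have hw'0 : w' 0 = v0 := rfl
  have hw'mid : ∀ i : ℕ, 1 ≤ i → i ≤ n → w' i = c (i - 1) := by
    intro i h1 h2
    simp only [hw'def]
    rw [if_neg (by omega), if_pos h2]
  have hw'N : w' (n + 1) = vN := by
    simp only [hw'def]
    rw [if_neg (by omega), if_neg (by omega)]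
  -- memberships
  have P1 : ∀ i : ℕ, i ≤ n → w' i ∈ (DE i : Sym2 V) := by
    intro i hi
    rcases Nat.eq_zero_or_pos i with rfl | h1
    · exact Sym2.other_mem _
    · rw [hw'mid i h1 hi]
      have := (hc (i - 1) (by omega)).2
      rwa [show i - 1 + 1 = i from by omega] at this
  have P2 : ∀ i : ℕ, i ≤ n → w' (i + 1) ∈ (DE i : Sym2 V) := by
    intro i hi
    rcases Nat.lt_or_ge i n with h | h
    · rw [hw'mid (i + 1) (by omega) (by omega)]
      simpa using (hc i h).1
    · have : i = n := by omega
      subst this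
      rw [hw'N]
      exact Sym2.other_mem _
  -- consecutive distinctness
  have P3 : ∀ i : ℕ, i ≤ n → w' i ≠ w' (i + 1) := by
    intro i hi
    rcases Nat.eq_zero_or_pos i with rfl | h1
    · rw [hw'0, hw'mid 1 le_rfl (by omega)]
      exact Sym2.other_ne (hndiag 0) _
    · rcases Nat.lt_or_ge i n with h | h
      · -- interior : both are c-values
        rw [hw'mid i h1 hi, hw'mid (i + 1) (by omega) (by omega)]
        intro hcc
        simp only [Nat.add_sub_cancel] at hcc
        -- c i ∈ DE (i-1) and c i ∈ DE (i+1)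
        have hx1 : c i ∈ (DE (i - 1) : Sym2 V) := hcc ▸ (hc (i - 1) (by omega)).1
        have hx2 : c i ∈ (DE (i + 1) : Sym2 V) := (hc i h).2
        exact shortcut (i - 1) (i + 1) (by omega) (by omega) (c i) hx1 hx2
      · have hin : i = n := by omega
        rw [hin, hw'mid n (by omega) le_rfl, hw'N]
        exact fun hh => Sym2.other_ne (hndiag n) hcn hh.symm
  -- global injectivity
  have P4 : ∀ i j : ℕ, i < j → j ≤ n + 1 → w' i ≠ w' j := by
    intro i j hij hj hw
    have hi : i ≤ n := by omega
    have hxi : w' i ∈ (DE i : Sym2 V) := P1 i hi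
    have hxj : w' i ∈ (DE (j - 1) : Sym2 V) := by
      have := P2 (j - 1) (by omega)
      rw [show j - 1 + 1 = j from by omega] at this
      exact hw ▸ this
    rcases Nat.lt_or_ge (i + 1) (j - 1) with hb | hb
    · exact shortcut i (j - 1) (by omega) (by omega) _ hxi hxj
    · rcases Nat.eq_or_lt_of_le (show i ≤ j - 1 from by omega) with hb' | hb'
      · -- j = i + 1
        exact P3 i hi (by rw [show i + 1 = j from by omega]; exact hw)
      · -- j = i + 2
        have hj2 : j = i + 2 := by omega
        have hin : i < n := by omega
        have hne : DE i ≠ DE (i + 1) := fun hdd =>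
          absurd (hinj' (by omega) (by omega) hdd) (by omega)
        have hne' : (DE i : Sym2 V) ≠ (DE (i + 1) : Sym2 V) :=
          fun hdd => hne (Subtype.ext hdd)
        have hxj' : w' i ∈ (DE (i + 1) : Sym2 V) := by
          rwa [show j - 1 = i + 1 from by omega] at hxj
        have hci : c i ∈ (DE i : Sym2 V) := (hc i hin).1
        have hci' : c i ∈ (DE (i + 1) : Sym2 V) := (hc i hin).2
        have : w' i = c i := sym2_common_unique hne' hxi hxj' hci hci'
        have hwc : w' (i + 1) = c i := by
          rw [hw'mid (i + 1) (by omega) (by omega)]; simp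
        exact P3 i hi (this.trans hwc.symm)
  -- assemble
  refine ⟨fun i => w' i, ?_, ?_, ?_⟩
  · intro i j hij
    apply Fin.ext
    rcases Nat.lt_trichotomy (i : ℕ) (j : ℕ) with h | h | h
    · exact absurd hij (P4 i j h (by omega))
    · exact h
    · exact absurd hij.symm (P4 j i h (by omega))
  · intro i
    have hi : (i : ℕ) ≤ n := by omega
    have hpair : (DE i : Sym2 V) = s(w' i, w' (i + 1)) :=
      sym2_eq_pair (P1 i hi) (P2 i hi) (P3 i hi)
    have : s(w' i, w' (i + 1)) ∈ G.edgeSet := hpair ▸ (DE (i : ℕ)).2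
    show G.Adj (w' (i.castSucc : ℕ)) (w' (i.succ : ℕ))
    rw [Fin.coe_castSucc, Fin.val_succ]
    exact G.mem_edgeSet.1 this
  · intro i
    have hi : (i : ℕ) ≤ n := by omega
    have hpair : (DE i : Sym2 V) = s(w' i, w' (i + 1)) :=
      sym2_eq_pair (P1 i hi) (P2 i hi) (P3 i hi)
    show (E i : Sym2 V) = s(w' (i.castSucc : ℕ), w' (i.succ : ℕ))
    rw [Fin.coe_castSucc, Fin.val_succ]
    rw [← hpair, hDE i.isLt]

end EdgeEndPaper
end

section
/- Let G be a graph and let r,s be rays in G. Then r ∼_E s in G if and only if φ(r) ∼ φ(s) in the line graph G′. Consequently, the map Φ : Ω_E(G) → Ω(G′) given by Φ([r]_E) = [φ(r)] is a well-defined injection. -/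
/-!
Formalization of definitions and a statement from
"Edge-connectivity and edge-ends in infinite graphs" (arXiv:2404.17106).
-/

universe u

namespace EdgeEndPaper

variable {V : Type u}

variable (G : SimpleGraph V)

/-- The tails of the rays `r` and `s` lie in the same connected component of `G - F`
(deletion of the edges in `F`). -/
def SameComp (F : Set (Sym2 V)) (r s : Ray G) : Prop :=
  ∃ N : ℕ, ∀ m n : ℕ, N ≤ m → N ≤ n → (G.deleteEdges F).Reachable (r.f m) (s.f n)

/-- Edge-equivalence of rays: no finite edge set separates the tails of `r` and `s`. -/
def EdgeEquiv (r s : Ray G) : Prop :=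
  ∀ F : Set (Sym2 V), F.Finite → SameComp G F r s

/-- The edge-end space `Ω_E(G)`. -/
def EdgeEnd : Type u := Quot (EdgeEquiv G)

/-- The edge-end `[r]_E` of a ray `r`. -/
def Ray.edgeEnd {G : SimpleGraph V} (r : Ray G) : EdgeEnd G := Quot.mk _ r

/-- `C_E(F, ω)` : the vertices of the connected component of `G - F` in which `ω` has a tail. -/
def CE (F : Set (Sym2 V)) (ω : EdgeEnd G) : Set V :=
  {v | ∃ r : Ray G, r.edgeEnd = ω ∧ ∃ N : ℕ, ∀ n : ℕ, N ≤ n →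
    (G.deleteEdges F).Reachable (r.f n) v}

/-- `Ω_E(F, ω)` : the edge-ends whose rays have tails in the same component of `G - F`
as the rays of `ω`. -/
def OmegaE (F : Set (Sym2 V)) (ω : EdgeEnd G) : Set (EdgeEnd G) :=
  {η | ∃ r s : Ray G, r.edgeEnd = ω ∧ s.edgeEnd = η ∧ SameComp G F r s}

/-- The topology on `Ω_E(G)`, with the sets `Ω_E(F, ω)` (for finite `F ⊆ E(G)`) as a basis. -/
def edgeEndTopology : TopologicalSpace (EdgeEnd G) :=
  .generateFrom {U | ∃ (F : Set (Sym2 V)) (ω : EdgeEnd G),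
    F.Finite ∧ F ⊆ G.edgeSet ∧ U = OmegaE G F ω}

/-- `Ê(F, ω) = C_E(F, ω) ∪ Ω_E(F, ω)`, inside `Ê(G) = V(G) ⊔ Ω_E(G)`. -/
def EHatBasic (F : Set (Sym2 V)) (ω : EdgeEnd G) : Set (V ⊕ EdgeEnd G) :=
  Sum.inl '' CE G F ω ∪ Sum.inr '' OmegaE G F ω

/-- The topology on `Ê(G) = V(G) ∪ Ω_E(G)`: the vertex singletons together with the sets
`Ê(F, ω)` (for finite `F ⊆ E(G)`) form a basis. -/
def eHatTopology : TopologicalSpace (V ⊕ EdgeEnd G) :=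
  .generateFrom ({U | ∃ v : V, U = {Sum.inl v}} ∪
    {U | ∃ (F : Set (Sym2 V)) (ω : EdgeEnd G),
      F.Finite ∧ F ⊆ G.edgeSet ∧ U = EHatBasic G F ω})

/-- A vertex `v` edge-dominates the edge-end `ω` if `v ∈ C_E(F, ω)` for every finite `F`. -/
def EdgeDominates (v : V) (ω : EdgeEnd G) : Prop :=
  ∀ F : Set (Sym2 V), F.Finite → v ∈ CE G F ω

/-- The cut `δ(X)`: the edges of `G` with one endpoint in `X` and the other outside of `X`. -/
def cut (X : Set V) : Set (Sym2 V) :=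
  {e | e ∈ G.edgeSet ∧ ∃ u v : V, e = s(u, v) ∧ u ∈ X ∧ v ∉ X}

/-- `u` and `v` are connected in `G` by a walk avoiding the vertex set `S`. -/
def ReachAvoid (S : Set V) (u v : V) : Prop :=
  ∃ p : G.Walk u v, ∀ w ∈ p.support, w ∉ S

/-- The tails of `r` and `s` lie in the same component of `G - S` (vertex deletion). -/
def VSameComp (S : Set V) (r s : Ray G) : Prop :=
  ∃ N : ℕ, ∀ m n : ℕ, N ≤ m → N ≤ n → ReachAvoid G S (r.f m) (s.f n)

/-- Equivalence of rays: no finite vertex set separates the tails of `r` and `s`. -/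
def VEquiv (r s : Ray G) : Prop :=
  ∀ S : Set V, S.Finite → VSameComp G S r s

/-- The end space `Ω(G)`. -/
def VEnd : Type u := Quot (VEquiv G)

/-- The end `[r]` of a ray `r`. -/
def Ray.vEnd {G : SimpleGraph V} (r : Ray G) : VEnd G := Quot.mk _ r

/-- `C(S, ω)` : the vertices of the component of `G - S` in which `ω` has a tail. -/
def CV (S : Set V) (ω : VEnd G) : Set V :=
  {v | ∃ r : Ray G, r.vEnd = ω ∧ ∃ N : ℕ, ∀ n : ℕ, N ≤ n → ReachAvoid G S (r.f n) v}

/-- `Ω(S, ω)` : the ends whose rays have tails in the same component of `G - S` as `ω`. -/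
def OmegaV (S : Set V) (ω : VEnd G) : Set (VEnd G) :=
  {η | ∃ r s : Ray G, r.vEnd = ω ∧ s.vEnd = η ∧ VSameComp G S r s}

/-- `V̂(S, ω) = C(S, ω) ∪ Ω(S, ω)`. -/
def VHatBasic (S : Set V) (ω : VEnd G) : Set (V ⊕ VEnd G) :=
  Sum.inl '' CV G S ω ∪ Sum.inr '' OmegaV G S ω

/-- The topology on `V̂(G) = V(G) ∪ Ω(G)`: the finite vertex sets and the sets `V̂(S, ω)`
form a basis of open sets. -/
def vHatTopology : TopologicalSpace (V ⊕ VEnd G) :=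
  .generateFrom ({U | ∃ A : Set V, A.Finite ∧ U = Sum.inl '' A} ∪
    {U | ∃ (S : Set V) (ω : VEnd G), S.Finite ∧ U = VHatBasic G S ω})

/-- The topology on the end space `Ω(G)`, with the sets `Ω(S, ω)` as a basis. -/
def endTopology : TopologicalSpace (VEnd G) :=
  .generateFrom {U | ∃ (S : Set V) (ω : VEnd G), S.Finite ∧ U = OmegaV G S ω}

/-- `C` is (the vertex set of) a connected component of the graph obtained from `G` by
deleting the vertex set `S`. -/
def CompAvoiding (S : Set V) (C : Set V) : Prop :=
  ∃ v : V, v ∉ S ∧ C = {u | ReachAvoid G S v u}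

/-- The ray `φ(r)` in the line graph of `G` induced by a ray `r` of `G`: its vertices are
the consecutive edges of `r`. -/
def phiRay {G : SimpleGraph V} (r : Ray G) : Ray G.lineGraph where
  f n := ⟨s(r.f n, r.f (n + 1)), G.mem_edgeSet.mpr (r.adj n)⟩
  inj a b h := by
    have h' : s(r.f a, r.f (a + 1)) = s(r.f b, r.f (b + 1)) := congrArg Subtype.val h
    rcases Sym2.eq_iff.mp h' with ⟨h1, _⟩ | ⟨h1, h2⟩
    · exact r.inj h1
    · have e1 := r.inj h1
      have e2 := r.inj h2
      omega
  adj n := by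
    refine SimpleGraph.lineGraph_adj_iff_exists.mpr ⟨?_, r.f (n + 1), ?_, ?_⟩
    · intro h
      have h' : s(r.f n, r.f (n + 1)) = s(r.f (n + 1), r.f (n + 2)) :=
        congrArg Subtype.val h
      rcases Sym2.eq_iff.mp h' with ⟨h1, _⟩ | ⟨h1, _⟩
      · have := r.inj h1; omega
      · have := r.inj h1; omega
    · exact Sym2.mem_iff.mpr (Or.inr rfl)
    · exact Sym2.mem_iff.mpr (Or.inl rfl)

/-!
A walk in `G - F`, read as the sequence of its edges, is a walk in the line graph `G'` avoiding
`F`; conversely, consecutive vertices of a walk in `G' - F` are edges outside `F` sharing an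
endpoint, so their endpoints are joined in `G - F`. Hence the tails of `r` and `s` are joined in
`G - F` exactly when the tails of `φ(r)` and `φ(s)` are joined in `G' - F`, and `Φ` is well
defined and injective because `∼` is an equivalence relation.
-/

lemma exists_forall_ge_notMem_of_injective {α : Type*} {g : ℕ → α}
    (hg : Function.Injective g) {S : Set α} (hS : S.Finite) :
    ∃ N : ℕ, ∀ n, N ≤ n → g n ∉ S := by
  have h := hg.tendsto_cofinite.eventually hS.eventually_cofinite_notMem
  rwa [Nat.cofinite_eq_atTop, Filter.eventually_atTop] at h

variable {G}

section ReachAvoid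

variable {S : Set V} {u v w : V}

lemma reachAvoid_refl (hu : u ∉ S) : ReachAvoid G S u u :=
  ⟨.nil, by simpa using hu⟩

lemma reachAvoid_of_adj (h : G.Adj u v) (hu : u ∉ S) (hv : v ∉ S) : ReachAvoid G S u v :=
  ⟨.cons h .nil, by simp [hu, hv]⟩

lemma ReachAvoid.symm (h : ReachAvoid G S u v) : ReachAvoid G S v u := by
  obtain ⟨p, hp⟩ := h
  exact ⟨p.reverse, fun x hx => hp x (by simpa using hx)⟩

lemma ReachAvoid.trans (h₁ : ReachAvoid G S u v) (h₂ : ReachAvoid G S v w) :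
    ReachAvoid G S u w := by
  obtain ⟨p, hp⟩ := h₁
  obtain ⟨q, hq⟩ := h₂
  refine ⟨p.append q, fun x hx => ?_⟩
  rcases (SimpleGraph.Walk.mem_support_append_iff _ _).mp hx with hx | hx
  exacts [hp x hx, hq x hx]

lemma Ray.exists_reachAvoid_tail (r : Ray G) (hS : S.Finite) :
    ∃ N : ℕ, ∀ m n, N ≤ m → N ≤ n → ReachAvoid G S (r.f m) (r.f n) := by
  obtain ⟨N, hN⟩ := exists_forall_ge_notMem_of_injective r.inj hS
  have along : ∀ m k, N ≤ m → ReachAvoid G S (r.f m) (r.f (m + k)) := by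
    intro m k hm
    induction k with
    | zero => exact reachAvoid_refl (hN m hm)
    | succ k ih =>
      exact ih.trans (reachAvoid_of_adj (r.adj _) (hN _ (by omega)) (hN _ (by omega)))
  refine ⟨N, fun m n hm hn => ?_⟩
  rcases le_total m n with hmn | hnm
  · obtain ⟨k, rfl⟩ := Nat.exists_eq_add_of_le hmn
    exact along m k hm
  · obtain ⟨k, rfl⟩ := Nat.exists_eq_add_of_le hnm
    exact (along n k hn).symm

variable (G) in
lemma vEquiv_equivalence : Equivalence (VEquiv G) where
  refl r _ hS := r.exists_reachAvoid_tail hS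
  symm h S hS := by
    obtain ⟨N, hN⟩ := h S hS
    exact ⟨N, fun m n hm hn => (hN n m hn hm).symm⟩
  trans h₁ h₂ S hS := by
    obtain ⟨N₁, hN₁⟩ := h₁ S hS
    obtain ⟨N₂, hN₂⟩ := h₂ S hS
    exact ⟨max N₁ N₂, fun m n hm hn =>
      (hN₁ m (max N₁ N₂) (by omega) (by omega)).trans (hN₂ _ n (by omega) (by omega))⟩

end ReachAvoid

section LineGraph

variable {F : Set (Sym2 V)} {S : Set G.edgeSet} {u v : V} {e f : G.edgeSet}

lemma reachAvoid_lineGraph_of_mem_of_mem (he : e ∉ S) (hf : f ∉ S) (hue : u ∈ (e : Sym2 V))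
    (huf : u ∈ (f : Sym2 V)) : ReachAvoid G.lineGraph S e f := by
  by_cases hef : e = f
  · exact hef ▸ reachAvoid_refl he
  · exact reachAvoid_of_adj (SimpleGraph.lineGraph_adj_iff_exists.mpr ⟨hef, u, hue, huf⟩) he hf

lemma reachable_deleteEdges_of_mem_of_mem (he : (e : Sym2 V) ∉ F) (hu : u ∈ (e : Sym2 V))
    (hv : v ∈ (e : Sym2 V)) : (G.deleteEdges F).Reachable u v := by
  by_cases huv : u = v
  · exact huv ▸ .refl u
  have hev : (e : Sym2 V) = s(u, v) := (Sym2.mem_and_mem_iff huv).mp ⟨hu, hv⟩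
  refine SimpleGraph.Adj.reachable (SimpleGraph.deleteEdges_adj.mpr ⟨?_, hev ▸ he⟩)
  exact G.mem_edgeSet.mp (hev ▸ e.2)

lemma reachAvoid_lineGraph_of_walk (p : (G.deleteEdges (Subtype.val '' S)).Walk u v)
    (he : e ∉ S) (hf : f ∉ S) (hu : u ∈ (e : Sym2 V)) (hv : v ∈ (f : Sym2 V)) :
    ReachAvoid G.lineGraph S e f := by
  induction p generalizing e with
  | nil => exact reachAvoid_lineGraph_of_mem_of_mem he hf hu hv
  | @cons a b c hab q ih =>
    obtain ⟨hGab, habS⟩ := SimpleGraph.deleteEdges_adj.mp hab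
    let g : G.edgeSet := ⟨s(a, b), G.mem_edgeSet.mpr hGab⟩
    have hg : g ∉ S := fun hgS => habS ⟨g, hgS, rfl⟩
    exact (reachAvoid_lineGraph_of_mem_of_mem he hg hu (Sym2.mem_mk_left a b)).trans
      (ih hg (Sym2.mem_mk_right a b) hv)

lemma reachable_deleteEdges_of_lineGraph_walk (q : G.lineGraph.Walk e f)
    (hq : ∀ x ∈ q.support, (x : Sym2 V) ∉ F) (hu : u ∈ (e : Sym2 V)) (hv : v ∈ (f : Sym2 V)) :
    (G.deleteEdges F).Reachable u v := by
  induction q generalizing u with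
  | nil => exact reachable_deleteEdges_of_mem_of_mem (hq _ (by simp)) hu hv
  | @cons e g f heg q ih =>
    obtain ⟨-, w, hwe, hwg⟩ := SimpleGraph.lineGraph_adj_iff_exists.mp heg
    exact (reachable_deleteEdges_of_mem_of_mem (hq e (by simp)) hu hwe).trans
      (ih (fun x hx => hq x (by simp [hx])) hwg hv)

variable {r s : Ray G}

lemma vSameComp_phiRay_of_sameComp (hS : S.Finite) (h : SameComp G (Subtype.val '' S) r s) :
    VSameComp G.lineGraph S (phiRay r) (phiRay s) := by
  obtain ⟨N, hN⟩ := h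
  obtain ⟨Nr, hNr⟩ := exists_forall_ge_notMem_of_injective (phiRay r).inj hS
  obtain ⟨Ns, hNs⟩ := exists_forall_ge_notMem_of_injective (phiRay s).inj hS
  refine ⟨max N (max Nr Ns), fun m n hm hn => ?_⟩
  obtain ⟨p⟩ := hN m n (by omega) (by omega)
  exact reachAvoid_lineGraph_of_walk p (hNr m (by omega)) (hNs n (by omega))
    (Sym2.mem_mk_left _ _) (Sym2.mem_mk_left _ _)

lemma sameComp_of_vSameComp_phiRay
    (h : VSameComp G.lineGraph (Subtype.val ⁻¹' F) (phiRay r) (phiRay s)) :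
    SameComp G F r s := by
  obtain ⟨N, hN⟩ := h
  refine ⟨N, fun m n hm hn => ?_⟩
  obtain ⟨q, hq⟩ := hN m n hm hn
  exact reachable_deleteEdges_of_lineGraph_walk q hq (Sym2.mem_mk_left _ _)
    (Sym2.mem_mk_left _ _)

lemma edgeEquiv_iff_vEquiv_phiRay : EdgeEquiv G r s ↔ VEquiv G.lineGraph (phiRay r) (phiRay s) :=
  ⟨fun h _ hS => vSameComp_phiRay_of_sameComp hS (h _ (hS.image _)),
    fun h _ hF => sameComp_of_vSameComp_phiRay (h _ (hF.preimage Subtype.val_injective.injOn))⟩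

end LineGraph

variable (G)

/-- Two rays of `G` are edge-equivalent iff the induced rays `φ(r)`, `φ(s)` of the line
graph are (vertex-)equivalent; consequently `Φ : Ω_E(G) → Ω(G')`, `[r]_E ↦ [φ(r)]`, is a
well-defined injection. -/
theorem edgeEquiv_iff_lineGraph_equiv :
    (∀ r s : Ray G, EdgeEquiv G r s ↔ VEquiv G.lineGraph (phiRay r) (phiRay s)) ∧
    ∃ Φ : EdgeEnd G → VEnd G.lineGraph,
      (∀ r : Ray G, Φ r.edgeEnd = (phiRay r).vEnd) ∧ Function.Injective Φ := by
  refine ⟨fun r s => edgeEquiv_iff_vEquiv_phiRay, Quot.lift (fun r => (phiRay r).vEnd)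
    (fun r s h => Quot.sound (edgeEquiv_iff_vEquiv_phiRay.mp h)), fun r => rfl, ?_⟩
  rintro ⟨r⟩ ⟨s⟩ h
  have hrs : Relation.EqvGen (VEquiv G.lineGraph) (phiRay r) (phiRay s) := Quot.eqvGen_exact h
  exact Quot.sound (edgeEquiv_iff_vEquiv_phiRay.mpr
    ((vEquiv_equivalence G.lineGraph).eqvGen_iff.mp hrs))

end EdgeEndPaper
end

section
/- Let G be a graph and let T ⊆ Ê(G) be a discrete subspace of Ê(G). Then there is a family {C_ω : ω ∈ T ∩ Ω_E(G)} of connected subgraphs of G such that: (i) C_{ω₁} ∩ C_{ω₂} = ∅ whenever ω₁ ≠ ω₂; and (ii) for every ω ∈ T ∩ Ω_E(G), the cut F_ω := δ(V(C_ω)) is finite and Ê(F_ω, ω) ∩ T = {ω}. -/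
/-!
Formalization of definitions and a statement from
"Edge-connectivity and edge-ends in infinite graphs" (arXiv:2404.17106).
-/

universe u

namespace EdgeEndPaper

variable {V : Type u}

variable (G : SimpleGraph V)

/-- The vertex set `C` induces a connected (nonempty) subgraph of `G`. -/
def ConnectedIn (C : Set V) : Prop :=
  C.Nonempty ∧ ∀ u ∈ C, ∀ v ∈ C, ∃ p : G.Walk u v, ∀ w ∈ p.support, w ∈ C

/-!
Discreteness gives, for each end `ω ∈ T`, a finite `F_ω` with `Ê(F_ω, ω) ∩ T = {ω}`. Well-order
these ends and let `D_ω` be the component containing a tail of `ω` of `C_E(F_ω, ω)` minus all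
earlier `D_η`. Such an earlier `D_η` meeting `C_E(F_ω, ω)` is connected and also contains a tail
of `η`, which lies outside `C_E(F_ω, ω)`; so it contains an edge of `F_ω`, and by disjointness
only finitely many `D_η` do. A tail of `ω` therefore avoids them all and lies in `D_ω`, and
`δ(D_ω)` lies in `F_ω` together with the finitely many finite cuts `δ(D_η)`. Finally `D_ω` is
contained in `C_E(F_ω, ω)` and contains a tail of `ω`, so `Ê(δ(D_ω), ω) ⊆ Ê(F_ω, ω)`.
-/

open Filter Function SimpleGraph Topology

variable {G}

lemma mk_mem_cut {X : Set V} {u v : V} (h : G.Adj u v) (hu : u ∈ X) (hv : v ∉ X) :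
    s(u, v) ∈ cut G X :=
  ⟨h, u, v, rfl, hu, hv⟩

lemma mem_of_reachable_of_cut_subset {X : Set V} {F : Set (Sym2 V)} (hX : cut G X ⊆ F)
    {u v : V} (h : (G.deleteEdges F).Reachable u v) (hu : u ∈ X) : v ∈ X := by
  obtain ⟨p⟩ := h
  induction p with
  | nil => exact hu
  | cons hadj _ ih =>
    rw [deleteEdges_adj] at hadj
    exact ih (by_contra fun hX' => hadj.2 (hX (mk_mem_cut hadj.1 hu hX')))

lemma finite_of_pairwise_disjoint_crossing {ι : Type*} {D : ι → Set V}
    (hD : Pairwise (Disjoint on D)) {X : Set V} (hX : (cut G X).Finite) {J : Set ι}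
    (hconn : ∀ j ∈ J, ConnectedIn G (D j))
    (hcross : ∀ j ∈ J, (D j ∩ X).Nonempty ∧ (D j \ X).Nonempty) : J.Finite := by
  have hedge : ∀ j ∈ J, ∃ e ∈ cut G X, ∀ x ∈ e, x ∈ D j := by
    intro j hj
    obtain ⟨⟨u, huD, huX⟩, w, hwD, hwX⟩ := hcross j hj
    obtain ⟨p, hp⟩ := (hconn j hj).2 u huD w hwD
    obtain ⟨d, hd, hfst, hsnd⟩ := p.exists_boundary_dart X huX hwX
    refine ⟨s(d.fst, d.snd), mk_mem_cut d.adj hfst hsnd, fun x hx => ?_⟩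
    rcases Sym2.mem_iff.1 hx with rfl | rfl
    exacts [hp _ (p.dart_fst_mem_support_of_mem_darts hd),
      hp _ (p.dart_snd_mem_support_of_mem_darts hd)]
  have hsub : ∀ e : Sym2 V, {j | ∀ x ∈ e, x ∈ D j}.Subsingleton := fun e j hj k hk =>
    by_contra fun hne => Set.disjoint_left.1 (hD hne) (hj _ e.out_fst_mem) (hk _ e.out_fst_mem)
  refine (hX.biUnion fun e _ => (hsub e).finite).subset fun j hj => ?_
  obtain ⟨e, he, heD⟩ := hedge j hj
  exact Set.mem_biUnion he heD

namespace Ray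

variable {S : Set V} (r : Ray G)

lemma edge_injective : Injective fun k => s(r.f k, r.f (k + 1)) := by
  intro k j h
  rcases Sym2.eq_iff.1 h with ⟨h₁, -⟩ | ⟨h₁, h₂⟩
  · exact r.inj h₁
  · have := r.inj h₁
    have := r.inj h₂
    omega

lemma eventually_edge_notMem {F : Set (Sym2 V)} (hF : F.Finite) :
    ∀ᶠ k in atTop, s(r.f k, r.f (k + 1)) ∉ F := by
  rw [← Nat.cofinite_eq_atTop, eventually_cofinite]
  simp only [not_not]
  exact hF.preimage r.edge_injective.injOn

lemma sameComp_self {F : Set (Sym2 V)} (hF : F.Finite) : SameComp G F r r := by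
  obtain ⟨N, hN⟩ := eventually_atTop.1 (r.eventually_edge_notMem hF)
  have hreach : ∀ n, N ≤ n → (G.deleteEdges F).Reachable (r.f N) (r.f n) := by
    intro n hn
    induction n, hn using Nat.le_induction with
    | base => rfl
    | succ n hn ih =>
      exact ih.trans (Adj.reachable ((deleteEdges_adj ..).2 ⟨r.adj n, hN n hn⟩))
  exact ⟨N, fun m n hm hn => (hreach m hm).symm.trans (hreach n hn)⟩

lemma exists_walk_of_tail {n m : ℕ} (hS : ∀ k, n ≤ k → r.f k ∈ S) (hnm : n ≤ m) :
    ∃ p : G.Walk (r.f n) (r.f m), ∀ w ∈ p.support, w ∈ S := by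
  induction m, hnm using Nat.le_induction with
  | base => exact ⟨.nil, by simpa using hS n le_rfl⟩
  | succ m hm ih =>
    obtain ⟨p, hp⟩ := ih
    refine ⟨p.concat (r.adj m), fun w hw => ?_⟩
    rw [Walk.support_concat, List.mem_append, List.mem_singleton] at hw
    rcases hw with hw | rfl
    exacts [hp w hw, hS _ (by omega)]

/-- The vertex set of the component of `G[S]` containing a tail of `r`; empty if no tail of `r`
lies in `S`. -/
def tailComponent (S : Set V) : Set V :=
  {v | ∃ n, (∀ m, n ≤ m → r.f m ∈ S) ∧ ∃ p : G.Walk (r.f n) v, ∀ w ∈ p.support, w ∈ S}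

variable {r}

lemma tailComponent_subset : r.tailComponent S ⊆ S :=
  fun v ⟨_, _, p, hp⟩ => hp v p.end_mem_support

lemma mem_tailComponent_of_walk {u v : V} (hu : u ∈ r.tailComponent S) (p : G.Walk u v)
    (hp : ∀ w ∈ p.support, w ∈ S) : v ∈ r.tailComponent S := by
  obtain ⟨n, hn, q, hq⟩ := hu
  refine ⟨n, hn, q.append p, fun w hw => ?_⟩
  rcases (Walk.mem_support_append_iff _ _).1 hw with hw | hw
  exacts [hq w hw, hp w hw]

lemma eventually_mem_tailComponent (h : ∀ᶠ n in atTop, r.f n ∈ S) :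
    ∀ᶠ n in atTop, r.f n ∈ r.tailComponent S := by
  obtain ⟨N, hN⟩ := eventually_atTop.1 h
  filter_upwards [eventually_ge_atTop N] with m hm
  obtain ⟨p, hp⟩ := r.exists_walk_of_tail hN hm
  exact ⟨N, hN, p, hp⟩

lemma connectedIn_tailComponent (h : (r.tailComponent S).Nonempty) :
    ConnectedIn G (r.tailComponent S) := by
  classical
  refine ⟨h, fun u hu v hv => ?_⟩
  obtain ⟨n₁, hn₁, p₁, hp₁⟩ := id hu
  obtain ⟨n₂, hn₂, p₂, hp₂⟩ := hv
  obtain ⟨q₁, hq₁⟩ := r.exists_walk_of_tail hn₁ (le_max_left n₁ n₂)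
  obtain ⟨q₂, hq₂⟩ := r.exists_walk_of_tail hn₂ (le_max_right n₁ n₂)
  let p := p₁.reverse.append (q₁.append (q₂.reverse.append p₂))
  have hp : ∀ w ∈ p.support, w ∈ S := by
    simp only [p, Walk.mem_support_append_iff, Walk.support_reverse, List.mem_reverse]
    rintro w (hw | hw | hw | hw)
    exacts [hp₁ w hw, hq₁ w hw, hq₂ w hw, hp₂ w hw]
  exact ⟨p, fun w hw => mem_tailComponent_of_walk hu (p.takeUntil w hw)
    fun x hx => hp x (p.support_takeUntil_subset_support hw hx)⟩

lemma cut_tailComponent_subset : cut G (r.tailComponent S) ⊆ cut G S := by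
  rintro e ⟨he, u, v, rfl, hu, hv⟩
  rw [mem_edgeSet] at he
  refine mk_mem_cut he (tailComponent_subset hu) fun hvS => hv ?_
  exact mem_tailComponent_of_walk hu he.toWalk (by simp [hvS, tailComponent_subset hu])

end Ray

section tailRegions

variable {ι : Type*} [LinearOrder ι] [WellFoundedLT ι] (A : ι → Set V) (r : ι → Ray G)

noncomputable def tailRegions : ι → Set V :=
  wellFounded_lt.fix fun i D => (r i).tailComponent (A i \ ⋃ j, ⋃ h : j < i, D j h)

lemma tailRegions_eq (i : ι) :
    tailRegions A r i = (r i).tailComponent (A i \ ⋃ j < i, tailRegions A r j) :=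
  wellFounded_lt.fix_eq _ i

lemma tailRegions_subset (i : ι) : tailRegions A r i ⊆ A i \ ⋃ j < i, tailRegions A r j := by
  rw [tailRegions_eq]
  exact Ray.tailComponent_subset

lemma pairwise_disjoint_tailRegions : Pairwise (Disjoint on tailRegions A r) := by
  have hlt : ∀ i j, j < i → Disjoint (tailRegions A r j) (tailRegions A r i) := fun i j hji =>
    Set.disjoint_left.2 fun _ hj hi =>
      (tailRegions_subset A r i hi).2 (Set.mem_iUnion₂.2 ⟨j, hji, hj⟩)
  intro i j hij
  rcases hij.lt_or_gt with h | h
  exacts [hlt j i h, (hlt i j h).symm]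

lemma connectedIn_tailRegions {i : ι} (h : (tailRegions A r i).Nonempty) :
    ConnectedIn G (tailRegions A r i) := by
  rw [tailRegions_eq] at h ⊢
  exact Ray.connectedIn_tailComponent h

lemma eventually_mem_tailRegions {i : ι} (hA : ∀ᶠ n in atTop, (r i).f n ∈ A i)
    (hfin : {j | j < i ∧ (tailRegions A r j ∩ A i).Nonempty}.Finite)
    (havoid : ∀ j < i, ∀ᶠ n in atTop, (r i).f n ∉ tailRegions A r j) :
    ∀ᶠ n in atTop, (r i).f n ∈ tailRegions A r i := by
  rw [tailRegions_eq]
  refine Ray.eventually_mem_tailComponent ?_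
  filter_upwards [hA, hfin.eventually_all.2 fun j hj => havoid j hj.1] with n hnA hn
  refine ⟨hnA, fun hU => ?_⟩
  obtain ⟨j, hji, hj⟩ := Set.mem_iUnion₂.1 hU
  exact hn j ⟨hji, _, hj, hnA⟩ hj

lemma cut_tailRegions_subset (i : ι) :
    cut G (tailRegions A r i) ⊆ cut G (A i) ∪
      ⋃ j ∈ {j | j < i ∧ (tailRegions A r j ∩ A i).Nonempty}, cut G (tailRegions A r j) := by
  intro e he
  rw [tailRegions_eq] at he
  obtain ⟨hE, u, v, rfl, hu, hv⟩ := Ray.cut_tailComponent_subset he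
  by_cases hvA : v ∈ A i
  · obtain ⟨j, hji, hvj⟩ := Set.mem_iUnion₂.1 (not_not.1 fun h => hv ⟨hvA, h⟩)
    refine Or.inr (Set.mem_iUnion₂.2 ⟨j, ⟨hji, v, hvj, hvA⟩, ?_⟩)
    rw [Sym2.eq_swap]
    exact mk_mem_cut hE.symm hvj fun huj => hu.2 (Set.mem_iUnion₂.2 ⟨j, hji, huj⟩)
  · exact Or.inl (mk_mem_cut hE hu.1 hvA)

theorem eventually_mem_and_finite_cut_tailRegions (hcut : ∀ i, (cut G (A i)).Finite)
    (hin : ∀ i, ∀ᶠ n in atTop, (r i).f n ∈ A i)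
    (hout : ∀ i j, i ≠ j → ∀ᶠ n in atTop, (r j).f n ∉ A i) (i : ι) :
    (∀ᶠ n in atTop, (r i).f n ∈ tailRegions A r i) ∧ (cut G (tailRegions A r i)).Finite := by
  induction i using WellFoundedLT.induction with | ind i ih => ?_
  set B := {j | j < i ∧ (tailRegions A r j ∩ A i).Nonempty}
  have hB : B.Finite := by
    refine finite_of_pairwise_disjoint_crossing (pairwise_disjoint_tailRegions A r) (hcut i)
      (fun j hj => connectedIn_tailRegions A r (hj.2.mono Set.inter_subset_left))
      fun j hj => ⟨hj.2, ?_⟩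
    obtain ⟨n, hn⟩ := ((ih j hj.1).1.and (hout i j hj.1.ne')).exists
    exact ⟨_, hn⟩
  refine ⟨eventually_mem_tailRegions A r (hin i) hB fun j hj => ?_, ?_⟩
  · exact (hout j i hj.ne).mono fun n hn hD => hn (tailRegions_subset A r j hD).1
  · exact ((hcut i).union (hB.biUnion fun j hj => (ih j hj.1).2)).subset
      (cut_tailRegions_subset A r i)

end tailRegions

section EdgeEnds

variable {F : Set (Sym2 V)} {ω η : EdgeEnd G}

lemma SameComp.symm {r s : Ray G} (h : SameComp G F r s) :
    SameComp G F s r :=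
  let ⟨N, hN⟩ := h
  ⟨N, fun m n hm hn => (hN n m hn hm).symm⟩

lemma SameComp.trans {r s t : Ray G}
    (h₁ : SameComp G F r s) (h₂ : SameComp G F s t) : SameComp G F r t := by
  obtain ⟨N₁, hN₁⟩ := h₁
  obtain ⟨N₂, hN₂⟩ := h₂
  exact ⟨max N₁ N₂, fun m n hm hn =>
    (hN₁ m (max N₁ N₂) (le_of_max_le_left hm) (le_max_left _ _)).trans
      (hN₂ _ n (le_max_right _ _) (le_of_max_le_right hn))⟩

lemma edgeEquiv_equivalence : Equivalence (EdgeEquiv G) where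
  refl r _ hF := r.sameComp_self hF
  symm h F hF := (h F hF).symm
  trans h₁ h₂ F hF := (h₁ F hF).trans (h₂ F hF)

lemma edgeEquiv_of_edgeEnd_eq {r s : Ray G} (h : r.edgeEnd = s.edgeEnd) : EdgeEquiv G r s :=
  (Equivalence.eqvGen_iff edgeEquiv_equivalence).1 (Quot.eq.1 h)

lemma CE_closed {v w : V} (hv : v ∈ CE G F ω) (h : (G.deleteEdges F).Reachable v w) :
    w ∈ CE G F ω :=
  let ⟨r, hr, N, hN⟩ := hv
  ⟨r, hr, N, fun n hn => (hN n hn).trans h⟩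

lemma cut_CE_subset : cut G (CE G F ω) ⊆ F := by
  rintro e ⟨he, u, v, rfl, hu, hv⟩
  by_contra hne
  exact hv (CE_closed hu (Adj.reachable ((deleteEdges_adj ..).2 ⟨he, hne⟩)))

lemma mem_CE_iff (hF : F.Finite) {r : Ray G} (hr : r.edgeEnd = ω) {v : V} :
    v ∈ CE G F ω ↔ ∀ᶠ n in atTop, (G.deleteEdges F).Reachable (r.f n) v := by
  refine ⟨?_, fun h => ⟨r, hr, eventually_atTop.1 h⟩⟩
  rintro ⟨r', hr', N, hN⟩
  obtain ⟨M, hM⟩ := edgeEquiv_of_edgeEnd_eq (hr.trans hr'.symm) F hF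
  filter_upwards [eventually_ge_atTop M] with n hn
  exact (hM n (max M N) hn (le_max_left _ _)).trans (hN _ (le_max_right _ _))

lemma mem_OmegaE_iff (hF : F.Finite) {s : Ray G} (hs : s.edgeEnd = η) :
    η ∈ OmegaE G F ω ↔ ∀ᶠ n in atTop, s.f n ∈ CE G F ω := by
  constructor
  · rintro ⟨r, s', hr, hs', hrs'⟩
    obtain ⟨N, hN⟩ := hrs'.trans (edgeEquiv_of_edgeEnd_eq (hs'.trans hs.symm) F hF)
    filter_upwards [eventually_ge_atTop N] with n hn
    exact ⟨r, hr, N, fun m hm => hN m n hm hn⟩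
  · intro h
    obtain ⟨r, hr⟩ := Quot.exists_rep ω
    obtain ⟨N, hN⟩ := s.sameComp_self hF
    obtain ⟨n₀, hn₀, hs₀⟩ := (h.and (eventually_ge_atTop N)).exists.imp fun _ h => h.symm
    obtain ⟨M, hM⟩ := eventually_atTop.1 ((mem_CE_iff hF hr).1 hs₀)
    exact ⟨r, s, hr, hs, max M N, fun m n hm hn =>
      (hM m (le_of_max_le_left hm)).trans (hN n₀ n hn₀ (le_of_max_le_right hn))⟩

lemma mem_OmegaE_self (hF : F.Finite) (ω : EdgeEnd G) : ω ∈ OmegaE G F ω :=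
  let ⟨r, hr⟩ := Quot.exists_rep ω
  ⟨r, r, hr, hr, r.sameComp_self hF⟩

lemma Ray.eventually_mem_CE (hF : F.Finite) {r : Ray G} (hr : r.edgeEnd = ω) :
    ∀ᶠ n in atTop, r.f n ∈ CE G F ω :=
  (mem_OmegaE_iff hF hr).1 (mem_OmegaE_self hF ω)

lemma Ray.eventually_notMem_CE (hF : F.Finite) {s : Ray G} (hs : s.edgeEnd = η)
    (hη : η ∉ OmegaE G F ω) : ∀ᶠ n in atTop, s.f n ∉ CE G F ω := by
  obtain ⟨N, hN⟩ := s.sameComp_self hF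
  filter_upwards [eventually_ge_atTop N] with n hn hmem
  refine hη ((mem_OmegaE_iff hF hs).2 ?_)
  filter_upwards [eventually_ge_atTop N] with m hm using CE_closed hmem (hN n m hn hm)

lemma CE_subset_of_mem_OmegaE (hF : F.Finite) (h : η ∈ OmegaE G F ω) :
    CE G F η ⊆ CE G F ω := by
  obtain ⟨s, hs⟩ := Quot.exists_rep η
  intro v hv
  obtain ⟨n, hreach, hmem⟩ := (((mem_CE_iff hF hs).1 hv).and ((mem_OmegaE_iff hF hs).1 h)).exists
  exact CE_closed hmem hreach

lemma EHatBasic_subset_of_mem_OmegaE (hF : F.Finite) (h : η ∈ OmegaE G F ω) :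
    EHatBasic G F η ⊆ EHatBasic G F ω := by
  have hCE := CE_subset_of_mem_OmegaE hF h
  have hOmegaE : OmegaE G F η ⊆ OmegaE G F ω := fun θ hθ => by
    obtain ⟨t, ht⟩ := Quot.exists_rep θ
    rw [mem_OmegaE_iff hF ht] at hθ ⊢
    exact hθ.mono fun _ hn => hCE hn
  exact Set.union_subset_union (Set.image_mono hCE) (Set.image_mono hOmegaE)

lemma EHatBasic_anti {F' : Set (Sym2 V)} (h : F ⊆ F') (ω : EdgeEnd G) :
    EHatBasic G F' ω ⊆ EHatBasic G F ω := by
  have hreach {u v : V} (huv : (G.deleteEdges F').Reachable u v) :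
      (G.deleteEdges F).Reachable u v :=
    huv.mono (deleteEdges_anti h)
  refine Set.union_subset_union (Set.image_mono ?_) (Set.image_mono ?_)
  · exact fun v ⟨r, hr, N, hN⟩ => ⟨r, hr, N, fun n hn => hreach (hN n hn)⟩
  · exact fun η ⟨r, s, hr, hs, N, hN⟩ => ⟨r, s, hr, hs, N, fun m n hm hn => hreach (hN m n hm hn)⟩

lemma inr_mem_EHatBasic (hF : F.Finite) (ω : EdgeEnd G) :
    (Sum.inr ω : V ⊕ EdgeEnd G) ∈ EHatBasic G F ω :=
  Or.inr ⟨ω, mem_OmegaE_self hF ω, rfl⟩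

lemma exists_EHatBasic_subset_of_isOpen {U : Set (V ⊕ EdgeEnd G)}
    (hU : IsOpen[eHatTopology G] U) (hω : Sum.inr ω ∈ U) :
    ∃ F : Set (Sym2 V), F.Finite ∧ EHatBasic G F ω ⊆ U := by
  induction hU generalizing ω with
  | basic W hW =>
    rcases hW with ⟨v, rfl⟩ | ⟨F, ω', hF, -, rfl⟩
    · simp at hω
    · obtain ⟨η, hη, hηω⟩ := hω.resolve_left (by simp)
      cases hηω
      exact ⟨F, hF, EHatBasic_subset_of_mem_OmegaE hF hη⟩
  | univ => exact ⟨∅, Set.finite_empty, Set.subset_univ _⟩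
  | inter U₁ U₂ _ _ ih₁ ih₂ =>
    obtain ⟨F₁, hF₁, h₁⟩ := ih₁ hω.1
    obtain ⟨F₂, hF₂, h₂⟩ := ih₂ hω.2
    exact ⟨F₁ ∪ F₂, hF₁.union hF₂, Set.subset_inter
      ((EHatBasic_anti Set.subset_union_left ω).trans h₁)
      ((EHatBasic_anti Set.subset_union_right ω).trans h₂)⟩
  | sUnion S _ ih =>
    obtain ⟨W, hWS, hωW⟩ := hω
    obtain ⟨F, hF, h⟩ := ih W hWS hωW
    exact ⟨F, hF, h.trans (Set.subset_sUnion_of_mem hWS)⟩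

variable {T : Set (V ⊕ EdgeEnd G)}

lemma EHatBasic_inter_eq_of_subset (hF : F.Finite) (hω : Sum.inr ω ∈ T)
    {U : Set (V ⊕ EdgeEnd G)} (hFU : EHatBasic G F ω ⊆ U) (hU : U ∩ T = {Sum.inr ω}) :
    EHatBasic G F ω ∩ T = {Sum.inr ω} :=
  (hU ▸ Set.inter_subset_inter_left T hFU).antisymm
    (Set.singleton_subset_iff.2 ⟨inr_mem_EHatBasic hF ω, hω⟩)

lemma exists_finite_EHatBasic_inter_eq
    (hT : ∀ t ∈ T, ∃ U : Set (V ⊕ EdgeEnd G), IsOpen[eHatTopology G] U ∧ U ∩ T = {t})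
    (hω : Sum.inr ω ∈ T) : ∃ F : Set (Sym2 V), F.Finite ∧ EHatBasic G F ω ∩ T = {Sum.inr ω} := by
  obtain ⟨U, hU, hUT⟩ := hT _ hω
  obtain ⟨F, hF, hFU⟩ := exists_EHatBasic_subset_of_isOpen hU (hUT.ge rfl).1
  exact ⟨F, hF, EHatBasic_inter_eq_of_subset hF hω hFU hUT⟩

lemma eq_of_mem_OmegaE (hsep : EHatBasic G F ω ∩ T = {Sum.inr ω}) (hη : Sum.inr η ∈ T)
    (h : η ∈ OmegaE G F ω) : η = ω :=
  Sum.inr_injective (hsep.le ⟨Or.inr ⟨η, h, rfl⟩, hη⟩)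

lemma EHatBasic_cut_subset (hF : F.Finite) {D : Set V} (hD : D ⊆ CE G F ω)
    (hcut : (cut G D).Finite) {r : Ray G} (hr : r.edgeEnd = ω)
    (htail : ∀ᶠ n in atTop, r.f n ∈ D) : EHatBasic G (cut G D) ω ⊆ EHatBasic G F ω := by
  have hCE : CE G (cut G D) ω ⊆ D := fun v hv => by
    obtain ⟨n, hreach, hn⟩ := (((mem_CE_iff hcut hr).1 hv).and htail).exists
    exact mem_of_reachable_of_cut_subset subset_rfl hreach hn
  have hOmegaE : OmegaE G (cut G D) ω ⊆ OmegaE G F ω := fun η hη => by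
    obtain ⟨s, hs⟩ := Quot.exists_rep η
    rw [mem_OmegaE_iff hcut hs] at hη
    rw [mem_OmegaE_iff hF hs]
    exact hη.mono fun _ hn => hD (hCE hn)
  exact Set.union_subset_union (Set.image_mono (hCE.trans hD)) (Set.image_mono hOmegaE)

end EdgeEnds

/-- For a discrete subspace `T ⊆ Ê(G)` there is a family `{C_ω : ω ∈ T ∩ Ω_E(G)}` of
disjoint connected subgraphs of `G` such that each cut `F_ω = δ(C_ω)` is finite and
`Ê(F_ω, ω) ∩ T = {ω}`. -/
theorem discrete_edgeEnd_separation (T : Set (V ⊕ EdgeEnd G))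
    (hT : ∀ t ∈ T, ∃ U : Set (V ⊕ EdgeEnd G), @IsOpen _ (eHatTopology G) U ∧ U ∩ T = {t}) :
    ∃ C : EdgeEnd G → Set V,
      (∀ ω : EdgeEnd G, Sum.inr ω ∈ T → ConnectedIn G (C ω)) ∧
      (∀ ω₁ ω₂ : EdgeEnd G, Sum.inr ω₁ ∈ T → Sum.inr ω₂ ∈ T → ω₁ ≠ ω₂ → C ω₁ ∩ C ω₂ = ∅) ∧
      (∀ ω : EdgeEnd G, Sum.inr ω ∈ T →
        (cut G (C ω)).Finite ∧ EHatBasic G (cut G (C ω)) ω ∩ T = {Sum.inr ω}) := by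
  classical
  choose F hF hsep using fun ω : {ω // Sum.inr ω ∈ T} => exists_finite_EHatBasic_inter_eq hT ω.2
  let r : {ω // Sum.inr ω ∈ T} → Ray G := fun ω => ω.1.out
  have hr (ω) : (r ω).edgeEnd = ω.1 := Quot.out_eq _
  obtain ⟨_, _⟩ := exists_wellFoundedLT {ω // Sum.inr ω ∈ T}
  let A ω := CE G (F ω) ω.1
  have hD := eventually_mem_and_finite_cut_tailRegions A r (fun ω => (hF ω).subset cut_CE_subset)
    (fun ω => (r ω).eventually_mem_CE (hF ω) (hr ω))
    fun ω η hne => (r η).eventually_notMem_CE (hF ω) (hr η)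
      fun h => hne (Subtype.ext (eq_of_mem_OmegaE (hsep ω) η.2 h).symm)
  refine ⟨fun ω => if h : Sum.inr ω ∈ T then tailRegions A r ⟨ω, h⟩ else ∅, ?_, ?_, ?_⟩
  · intro ω hω
    simp only [dif_pos hω]
    obtain ⟨n, hn⟩ := (hD ⟨ω, hω⟩).1.exists
    exact connectedIn_tailRegions A r ⟨_, hn⟩
  · intro ω₁ ω₂ h₁ h₂ hne
    simp only [dif_pos h₁, dif_pos h₂]
    exact (pairwise_disjoint_tailRegions A r fun h => hne (congrArg Subtype.val h)).inter_eq
  · intro ω hω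
    simp only [dif_pos hω]
    obtain ⟨htail, hcut⟩ := hD ⟨ω, hω⟩
    refine ⟨hcut, EHatBasic_inter_eq_of_subset hcut hω ?_ (hsep ⟨ω, hω⟩)⟩
    exact EHatBasic_cut_subset (hF _) ((tailRegions_subset A r _).trans Set.sdiff_subset) hcut
      (hr _) htail

end EdgeEndPaper
end
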